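/- In every connected loop diagram, every external vertex is labeled B or b. (Combinatorial content of Corollary 2: any connected loop diagram possessing an external leg whose field is different from B and b vanishes; in this gauge no such diagram can be drawn.) -/

import Mathlib

/-!  Feynman-diagram combinatorics of 4D topological Yang–Mills theory
in the (anti-)self-dual Landau gauges. -/

/-- The ten field labels. -/
inductive Fld : Type
  | A | psi | chibar | c | cbar | phi | phibar | etabar | B | b
  deriving DecidableEq

/-- The seven allowed interaction-vertex types (multisets of labels). -/
def vertexTypes : List (Multiset Fld) :=
  [ {Fld.B, Fld.A, Fld.A}
  , {Fld.chibar, Fld.A, Fld.c}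
  , {Fld.A, Fld.psi, Fld.chibar}
  , {Fld.A, Fld.cbar, Fld.c}
  , {Fld.A, Fld.phibar, Fld.phi}
  , {Fld.phibar, Fld.c, Fld.psi}
  , {Fld.chibar, Fld.c, Fld.A, Fld.A} ]

/-- The six allowed propagator types (unordered pairs of labels). -/
def propTypes : List (Multiset Fld) :=
  [ {Fld.c, Fld.cbar}
  , {Fld.chibar, Fld.psi}
  , {Fld.etabar, Fld.psi}
  , {Fld.phi, Fld.phibar}
  , {Fld.A, Fld.B}
  , {Fld.A, Fld.b} ]

/-- A Feynman diagram: a finite set `H` of half-edges labelled by fields,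
partitioned into vertices (the fibers of `vtx`), each vertex being an
interaction vertex of one of the seven allowed types or an external vertex
(a single half-edge), together with a perfect matching `mu` whose matched
pairs realize one of the six allowed propagator types. -/
structure Diagram where
  H : Type
  V : Type
  [fintypeH : Fintype H]
  [decEqH : DecidableEq H]
  [fintypeV : Fintype V]
  [decEqV : DecidableEq V]
  vtx : H → V
  vtx_surj : Function.Surjective vtx
  lab : H → Fld
  mu : H → H
  mu_invol : Function.Involutive mu
  mu_ne : ∀ h, mu h ≠ h
  prop_ok : ∀ h, ({lab h, lab (mu h)} : Multiset Fld) ∈ propTypes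
  vtx_ok : ∀ v : V,
      ((Finset.univ.filter (fun h => vtx h = v)).val.map lab) ∈ vertexTypes
      ∨ ∃ h, Finset.univ.filter (fun h' => vtx h' = v) = {h}

attribute [instance] Diagram.fintypeH Diagram.decEqH Diagram.fintypeV Diagram.decEqV

namespace Diagram

variable (D : Diagram)

/-- The set of half-edges belonging to a vertex. -/
def fiber (v : D.V) : Finset D.H := Finset.univ.filter (fun h => D.vtx h = v)

/-- The multiset of field labels carried by a vertex. -/
def labels (v : D.V) : Multiset Fld := (D.fiber v).val.map D.lab

/-- An external vertex: a single half-edge (an external leg). -/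
def IsExternal (v : D.V) : Prop := ∃ h, D.fiber v = {h}

/-- An interaction vertex: its labels form one of the seven allowed types. -/
def IsInteraction (v : D.V) : Prop := D.labels v ∈ vertexTypes

/-- Adjacency of the multigraph of the diagram. -/
def Adj (v w : D.V) : Prop := ∃ h, D.vtx h = v ∧ D.vtx (D.mu h) = w

/-- Connectedness of the multigraph of the diagram. -/
def Connected : Prop := ∀ v w : D.V, Relation.ReflTransGen D.Adj v w

/-- A cycle of the multigraph: a closed walk `e 0, e 1, …, e (n-1)` of
half-edges (each matched pair `{e i, mu (e i)}` being the traversed edge),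
of positive length, with pairwise distinct edges and pairwise distinct
vertices. -/
structure Cycle where
  n : ℕ
  npos : 0 < n
  e : ZMod n → D.H
  step : ∀ i, D.vtx (D.mu (e i)) = D.vtx (e (i + 1))
  edges_distinct : ∀ i j, i ≠ j → e i ≠ e j ∧ e i ≠ D.mu (e j)
  vtx_inj : Function.Injective fun i => D.vtx (e i)

/-- A loop diagram: the multigraph contains a cycle. -/
def IsLoopDiagram : Prop := Nonempty D.Cycle

end Diagram

/-!
Orient every propagator towards its *head* end, the one labelled `B`, `b`, `χbar`, `ηbar`, `cbar`
or `φbar`. Every interaction vertex then has exactly one head leg, so a vertex has at most one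
incoming line. Along a cycle of `n` edges the `n` head ends sit at distinct cycle vertices, hence
every cycle vertex is entered from the cycle itself. The set of vertices reachable from the cycle
along oriented lines is then closed under adjacency: a line leaving it through a vertex's head leg
would come from the cycle-reachable tail of that very leg. By connectedness every vertex, in
particular every external one, carries a head leg. Finally ghost number is conserved by every
propagator and every interaction vertex, and head legs have ghost number `≤ 0`, so all external
legs have ghost number `0`; the only such head labels are `B` and `b`.
-/

instance : Fintype Fld :=
  ⟨{.A, .psi, .chibar, .c, .cbar, .phi, .phibar, .etabar, .B, .b},
    fun x => by cases x <;> decide⟩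

namespace Fld

def isHead : Fld → Bool
  | .B | .b | .chibar | .etabar | .cbar | .phibar => true
  | _ => false

def ghostNumber : Fld → ℤ
  | .c | .psi => 1
  | .cbar | .chibar | .etabar => -1
  | .phi => 2
  | .phibar => -2
  | _ => 0

theorem isHead_or_isHead_of_mem_propTypes {x y : Fld} :
    ({x, y} : Multiset Fld) ∈ propTypes → x.isHead ∨ y.isHead := by
  revert x y; decide

theorem ghostNumber_add_eq_zero_of_mem_propTypes {x y : Fld} :
    ({x, y} : Multiset Fld) ∈ propTypes → x.ghostNumber + y.ghostNumber = 0 := by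
  revert x y; decide

theorem countP_isHead_of_mem_vertexTypes {m : Multiset Fld} :
    m ∈ vertexTypes → m.countP (fun f => f.isHead) = 1 := by
  revert m; decide

theorem sum_map_ghostNumber_of_mem_vertexTypes {m : Multiset Fld} :
    m ∈ vertexTypes → (m.map ghostNumber).sum = 0 := by
  revert m; decide

theorem ghostNumber_nonpos_of_isHead {f : Fld} : f.isHead → f.ghostNumber ≤ 0 := by
  revert f; decide

theorem eq_B_or_eq_b_of_isHead_of_ghostNumber_eq_zero {f : Fld} :
    f.isHead → f.ghostNumber = 0 → f = B ∨ f = b := by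
  revert f; decide

end Fld

namespace Diagram

variable (D : Diagram)

@[simp]
theorem mem_fiber {h : D.H} {v : D.V} : h ∈ D.fiber v ↔ D.vtx h = v := by
  simp [fiber]

theorem isInteraction_or_isExternal (v : D.V) : D.IsInteraction v ∨ D.IsExternal v :=
  D.vtx_ok v

theorem eq_of_fiber_eq_singleton {v : D.V} {h₀ h : D.H} (hv : D.fiber v = {h₀})
    (hh : D.vtx h = v) : h = h₀ := by
  simpa [hv] using D.mem_fiber.mpr hh

theorem isHead_lab_or_isHead_lab_mu (h : D.H) : (D.lab h).isHead ∨ (D.lab (D.mu h)).isHead :=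
  Fld.isHead_or_isHead_of_mem_propTypes (D.prop_ok h)

theorem card_filter_isHead_fiber_le_one (v : D.V) :
    ((D.fiber v).filter fun h => (D.lab h).isHead).card ≤ 1 := by
  rcases D.isInteraction_or_isExternal v with hv | ⟨h₀, hv⟩
  · have hcount := Fld.countP_isHead_of_mem_vertexTypes hv
    rw [labels, Multiset.countP_map] at hcount
    exact hcount.le
  · exact (Finset.card_filter_le _ _).trans (by rw [hv, Finset.card_singleton])

theorem eq_of_isHead_of_vtx_eq {h h' : D.H} (hh : (D.lab h).isHead) (hh' : (D.lab h').isHead)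
    (hv : D.vtx h = D.vtx h') : h = h' :=
  Finset.card_le_one.mp (D.card_filter_isHead_fiber_le_one (D.vtx h')) h (by simp [hh, hv])
    h' (by simp [hh'])

namespace Cycle

variable {D} (K : D.Cycle)

def ends (j : ZMod K.n) : Finset D.H := {K.e j, D.mu (K.e j)}

theorem mu_mem_ends {j : ZMod K.n} {h : D.H} (hh : h ∈ K.ends j) : D.mu h ∈ K.ends j := by
  simp only [ends, Finset.mem_insert, Finset.mem_singleton] at hh ⊢
  rcases hh with rfl | rfl
  · exact Or.inr rfl
  · exact Or.inl (D.mu_invol _)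

theorem exists_vtx_eq_of_mem_ends {j : ZMod K.n} {h : D.H} (hh : h ∈ K.ends j) :
    ∃ k, D.vtx h = D.vtx (K.e k) := by
  simp only [ends, Finset.mem_insert, Finset.mem_singleton] at hh
  rcases hh with rfl | rfl
  · exact ⟨j, rfl⟩
  · exact ⟨j + 1, K.step j⟩

theorem eq_of_mem_ends {i j : ZMod K.n} {h : D.H} (hi : h ∈ K.ends i) (hj : h ∈ K.ends j) :
    i = j := by
  by_contra hne
  have hij := K.edges_distinct i j hne
  have hji := K.edges_distinct j i (Ne.symm hne)
  simp only [ends, Finset.mem_insert, Finset.mem_singleton] at hi hj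
  rcases hi with rfl | rfl <;> rcases hj with hj | hj
  · exact hij.1 hj
  · exact hij.2 hj
  · exact hji.2 hj.symm
  · exact hij.1 (D.mu_invol.injective hj)

/-- Pigeonhole: the `n` head ends of the cycle edges sit at `n` distinct cycle vertices. -/
theorem exists_isHead_mem_ends (i : ZMod K.n) :
    ∃ j, ∃ h ∈ K.ends j, (D.lab h).isHead ∧ D.vtx h = D.vtx (K.e i) := by
  have : NeZero K.n := ⟨K.npos.ne'⟩
  have hhead (j : ZMod K.n) : ∃ h ∈ K.ends j, (D.lab h).isHead := by
    rcases D.isHead_lab_or_isHead_lab_mu (K.e j) with hh | hh <;> exact ⟨_, by simp [ends], hh⟩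
  choose head head_mem head_isHead using hhead
  choose idx vtx_head using fun j => K.exists_vtx_eq_of_mem_ends (head_mem j)
  have idx_injective : Function.Injective idx := fun j j' hjj' =>
    K.eq_of_mem_ends (head_mem j) <|
      (D.eq_of_isHead_of_vtx_eq (head_isHead j) (head_isHead j')
        (by rw [vtx_head, vtx_head, hjj'])) ▸ head_mem j'
  obtain ⟨j, rfl⟩ := (Finite.injective_iff_surjective.mp idx_injective) i
  exact ⟨j, head j, head_mem j, head_isHead j, vtx_head j⟩

end Cycle

def Feeds (v w : D.V) : Prop :=
  ∃ h, D.vtx h = v ∧ D.vtx (D.mu h) = w ∧ (D.lab (D.mu h)).isHead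

theorem forall_mem_of_connected (hconn : D.Connected) {S : Set D.V} (hne : S.Nonempty)
    (hhead : ∀ v ∈ S, ∃ h, D.vtx h = v ∧ (D.lab h).isHead ∧ D.vtx (D.mu h) ∈ S)
    (hfeeds : ∀ v ∈ S, ∀ w, D.Feeds v w → w ∈ S) (v : D.V) : v ∈ S := by
  obtain ⟨v₀, hv₀⟩ := hne
  induction hconn v₀ v with
  | refl => exact hv₀
  | tail _ hadj hx =>
    obtain ⟨h, rfl, rfl⟩ := hadj
    rcases D.isHead_lab_or_isHead_lab_mu h with hh | hh
    · obtain ⟨h', hvtx, hh', hmem⟩ := hhead _ hx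
      rwa [D.eq_of_isHead_of_vtx_eq hh hh' hvtx.symm]
    · exact hfeeds _ hx _ ⟨h, rfl, rfl, hh⟩

theorem exists_isHead_of_connected_of_isLoopDiagram (hconn : D.Connected)
    (hloop : D.IsLoopDiagram) (v : D.V) : ∃ h, D.vtx h = v ∧ (D.lab h).isHead := by
  obtain ⟨K⟩ := hloop
  let S : Set D.V := {v | ∃ i, Relation.ReflTransGen D.Feeds (D.vtx (K.e i)) v}
  have hhead : ∀ v ∈ S, ∃ h, D.vtx h = v ∧ (D.lab h).isHead ∧ D.vtx (D.mu h) ∈ S := by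
    rintro v ⟨i, hi⟩
    rcases hi.cases_tail with rfl | ⟨u, hu, h, rfl, rfl, hh⟩
    · obtain ⟨j, h, hends, hh, hv⟩ := K.exists_isHead_mem_ends i
      obtain ⟨k, hk⟩ := K.exists_vtx_eq_of_mem_ends (K.mu_mem_ends hends)
      exact ⟨h, hv, hh, k, hk ▸ .refl⟩
    · exact ⟨D.mu h, rfl, hh, i, by rwa [D.mu_invol]⟩
  have hfeeds : ∀ v ∈ S, ∀ w, D.Feeds v w → w ∈ S :=
    fun _ ⟨i, hi⟩ _ hvw => ⟨i, hi.tail hvw⟩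
  obtain ⟨h, hv, hh, -⟩ :=
    hhead v (D.forall_mem_of_connected hconn (S := S) ⟨_, 0, .refl⟩ hhead hfeeds v)
  exact ⟨h, hv, hh⟩

theorem sum_ghostNumber_lab_eq_zero : ∑ h, (D.lab h).ghostNumber = 0 :=
  Finset.sum_ninvolution D.mu
    (fun h => Fld.ghostNumber_add_eq_zero_of_mem_propTypes (D.prop_ok h))
    (fun h _ => D.mu_ne h) (fun _ => Finset.mem_univ _) D.mu_invol

theorem sum_fiber_ghostNumber_of_isInteraction {v : D.V} (hv : D.IsInteraction v) :
    ∑ h ∈ D.fiber v, (D.lab h).ghostNumber = 0 := by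
  have hsum := Fld.sum_map_ghostNumber_of_mem_vertexTypes hv
  rwa [labels, Multiset.map_map] at hsum

theorem sum_fiber_ghostNumber_nonpos {v : D.V} (hhead : ∃ h, D.vtx h = v ∧ (D.lab h).isHead) :
    ∑ h ∈ D.fiber v, (D.lab h).ghostNumber ≤ 0 := by
  rcases D.isInteraction_or_isExternal v with hv | ⟨h₀, hv⟩
  · exact (D.sum_fiber_ghostNumber_of_isInteraction hv).le
  · obtain ⟨h, hvtx, hh⟩ := hhead
    rw [hv, Finset.sum_singleton, ← D.eq_of_fiber_eq_singleton hv hvtx]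
    exact Fld.ghostNumber_nonpos_of_isHead hh

theorem sum_fiber_ghostNumber_eq_zero (hhead : ∀ v, ∃ h, D.vtx h = v ∧ (D.lab h).isHead)
    (v : D.V) : ∑ h ∈ D.fiber v, (D.lab h).ghostNumber = 0 := by
  have htotal : ∑ v, ∑ h ∈ D.fiber v, (D.lab h).ghostNumber = 0 :=
    (Finset.sum_fiberwise _ D.vtx _).trans D.sum_ghostNumber_lab_eq_zero
  exact (Finset.sum_eq_zero_iff_of_nonpos fun v _ => D.sum_fiber_ghostNumber_nonpos (hhead v)).mp
    htotal v (Finset.mem_univ v)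

end Diagram

/-- combinatorial content of Corollary 2. In every connected
loop diagram, every external vertex is labeled `B` or `b`. -/
theorem external_legs_of_loop_diagram_are_B_or_b (D : Diagram)
    (hconn : D.Connected) (hloop : D.IsLoopDiagram) :
    ∀ v : D.V, D.IsExternal v →
      ∃ h₀, D.fiber v = {h₀} ∧ (D.lab h₀ = Fld.B ∨ D.lab h₀ = Fld.b) := by
  have hhead := D.exists_isHead_of_connected_of_isLoopDiagram hconn hloop
  rintro v ⟨h₀, hv⟩
  have hh₀ : (D.lab h₀).isHead := by
    obtain ⟨h, hvtx, hh⟩ := hhead v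
    rwa [← D.eq_of_fiber_eq_singleton hv hvtx]
  have hghost : (D.lab h₀).ghostNumber = 0 := by
    simpa [hv] using D.sum_fiber_ghostNumber_eq_zero hhead v
  exact ⟨h₀, hv, Fld.eq_B_or_eq_b_of_isHead_of_ghostNumber_eq_zero hh₀ hghost⟩
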